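/- arXiv:1109.4606 — 6 statements merged into one kernel-verified Lean document; each statement's English description precedes it below -/
import Mathlib

section
/- Let W be a Weyl group with set of involutions I = {w ∈ W : w^2 = 1}. Define a ℚ-linear action of each simple reflection s ∈ S on the ℚ-vector space M₁ with basis (a_w)_{w ∈ I} by: s·a_w = a_w + 2a_{sw} if sw = ws > w; s·a_w = -a_w if sw = ws < w; s·a_w = a_{sws} if sw ≠ ws. Then these operators satisfy s² = 1 for each s ∈ S, i.e., applying s twice to any basis vector a_w returns a_w. -/
open Finsupp

/-!
If `s` commutes with `w`, then `sw` is again an involution commuting with `s`, and exactly one of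
`w`, `sw` is the shorter, so on the span of `a_w, a_{sw}` the operator `s` is either `-1` or
`a_w ↦ a_w + 2a_{sw}, a_{sw} ↦ -a_{sw}`; both square to `1`. If `s` does not commute with `w`, then
`sws` is an involution not commuting with `s` either, and `s` swaps `a_w` and `a_{sws}`.
-/

theorem LinearMap.apply_apply_of_apply_eq_add_nsmul {R V : Type*} [Semiring R] [AddCommGroup V]
    [Module R V] (T : V →ₗ[R] V) {a b : V} {n : ℕ} (ha : T a = a + n • b) (hb : T b = -b) :
    T (T a) = a := by
  rw [ha, map_add, map_nsmul, ha, hb, smul_neg, add_neg_cancel_right]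

theorem Commute.mul_mul_self_eq_one {G : Type*} [Monoid G] {a b : G} (h : Commute a b)
    (ha : a * a = 1) (hb : b * b = 1) : a * b * (a * b) = 1 := by
  rw [h.symm.mul_mul_mul_comm, ha, hb, one_mul]

namespace CoxeterSystem

variable {B W : Type*} [Group W] {M : CoxeterMatrix B} (cs : CoxeterSystem M W) {w : W} (i : B)

theorem simple_conj_mul_self (hw : w * w = 1) :
    cs.simple i * w * cs.simple i * (cs.simple i * w * cs.simple i) = 1 := by
  simp only [← mul_assoc, cs.simple_mul_simple_cancel_right]
  rw [mul_assoc _ w w, hw, mul_one, cs.simple_mul_simple_self]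

theorem simple_conj_simple_conj :
    cs.simple i * (cs.simple i * w * cs.simple i) * cs.simple i = w := by
  rw [← mul_assoc, cs.simple_mul_simple_cancel_left, cs.simple_mul_simple_cancel_right]

theorem not_commute_simple_conj (hc : ¬Commute (cs.simple i) w) :
    ¬Commute (cs.simple i) (cs.simple i * w * cs.simple i) := by
  intro h
  have h' := h.eq
  simp only [← mul_assoc] at h'
  rw [cs.simple_mul_simple_self, one_mul, cs.simple_mul_simple_cancel_right] at h'
  exact hc h'.symm

end CoxeterSystem

theorem sigma_squared_eq_one_general {B W : Type*} [Group W] {M : CoxeterMatrix B}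
    (cs : CoxeterSystem M W) (σ : B → ((W →₀ ℚ) →ₗ[ℚ] (W →₀ ℚ)))
    (h1 : ∀ (i : B) (w : W), w * w = 1 →
      cs.simple i * w = w * cs.simple i →
      cs.length w < cs.length (cs.simple i * w) →
      σ i (single w 1) = single w 1 + 2 • single (cs.simple i * w) 1)
    (h2 : ∀ (i : B) (w : W), w * w = 1 →
      cs.simple i * w = w * cs.simple i →
      cs.length (cs.simple i * w) < cs.length w →
      σ i (single w 1) = - single w 1)
    (h3 : ∀ (i : B) (w : W), w * w = 1 →
      cs.simple i * w ≠ w * cs.simple i →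
      σ i (single w 1) = single (cs.simple i * w * cs.simple i) 1) :
    ∀ (i : B) (w : W), w * w = 1 → σ i (σ i (single w 1)) = single w 1 := by
  intro i w hw
  by_cases hc : Commute (cs.simple i) w
  · rcases (cs.length_simple_mul_ne w i).lt_or_gt with hdesc | hasc
    · rw [h2 i w hw hc hdesc, map_neg, h2 i w hw hc hdesc, neg_neg]
    · refine (σ i).apply_apply_of_apply_eq_add_nsmul (h1 i w hw hc hasc) (h2 i _ ?_ ?_ ?_)
      · exact hc.mul_mul_self_eq_one (cs.simple_mul_simple_self i) hw
      · exact (Commute.refl _).mul_right hc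
      · rwa [cs.simple_mul_simple_cancel_left]
  · rw [h3 i w hw hc, h3 i _ (cs.simple_conj_mul_self i hw) (cs.not_commute_simple_conj i hc),
      cs.simple_conj_simple_conj]

/-- the operators `σ s` on the ℚ-vector space with basis indexed by the
involutions of a Weyl group `W`, defined by
`s·a_w = a_w + 2a_{sw}` if `sw = ws > w`, `s·a_w = -a_w` if `sw = ws < w`,
`s·a_w = a_{sws}` if `sw ≠ ws`, satisfy `s² = 1` on each basis vector `a_w`. -/
theorem sigma_squared_eq_one {B W : Type*} [Group W] [Finite W] {M : CoxeterMatrix B}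
    (cs : CoxeterSystem M W) (σ : B → ((W →₀ ℚ) →ₗ[ℚ] (W →₀ ℚ)))
    (h1 : ∀ (i : B) (w : W), w * w = 1 →
      cs.simple i * w = w * cs.simple i →
      cs.length w < cs.length (cs.simple i * w) →
      σ i (single w 1) = single w 1 + 2 • single (cs.simple i * w) 1)
    (h2 : ∀ (i : B) (w : W), w * w = 1 →
      cs.simple i * w = w * cs.simple i →
      cs.length (cs.simple i * w) < cs.length w →
      σ i (single w 1) = - single w 1)
    (h3 : ∀ (i : B) (w : W), w * w = 1 →
      cs.simple i * w ≠ w * cs.simple i →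
      σ i (single w 1) = single (cs.simple i * w * cs.simple i) 1) :
    ∀ (i : B) (w : W), w * w = 1 → σ i (σ i (single w 1)) = single w 1 :=
  sigma_squared_eq_one_general cs σ h1 h2 h3
end

section
/- Let W be a Coxeter group, I its set of involutions, and M the free ℤ[u,u⁻¹]-module with basis (a_w)_{w∈I}. For s ∈ S define the operator T_s on M by: (T_s+1)(a_w) = (u+1)(a_w + a_{sw}) if sw = ws > w; (T_s+1)(a_w) = (u²-u)(a_w + a_{sw}) if sw = ws < w; (T_s+1)(a_w) = a_w + a_{sws} if sw ≠ ws > w; (T_s+1)(a_w) = u²(a_w + a_{sws}) if sw ≠ ws < w. Then for every s ∈ S and every m ∈ M, the quadratic relation T_s² m = (u²-1) T_s m + u² m holds. -/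
/-!
For an involution `w` let `w'` be `s w` if `s w = w s`, and `s w s` otherwise. Then `w'` is an
involution with partner `w`, lying in the opposite length case, so the defining formulas read
`(T_s + 1) a_w = c (a_w + a_w')` and `(T_s + 1) a_w' = c' (a_w' + a_w)` with `c + c' = u² + 1`
(`{c, c'} = {u + 1, u² - u}`, resp. `{1, u²}`). On that plane `(T_s + 1)² = (u² + 1)(T_s + 1)`,
which is the quadratic relation, and by linearity it holds on the whole span.

For `s w ≠ w s` the claim about length cases says `ℓ(s w s) = ℓ(w) ± 2`, with the sign of
`ℓ(s w) - ℓ(w)`. It follows from the exchange condition, which we obtain from Humphreys' action of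
`W` on pairs (reflection, sign): that action shows that the parity of the number of occurrences of
a reflection in the left inversion sequence of a word depends only on the product of the word.
-/

namespace CoxeterSystem

open List

variable {B W : Type*} [Group W] {M : CoxeterMatrix B} (cs : CoxeterSystem M W)

local prefix:100 "s " => cs.simple
local prefix:100 "π " => cs.wordProd
local prefix:100 "ℓ " => cs.length
local prefix:100 "lis " => cs.leftInvSeq

theorem prod_map_alternatingWord_two_mul {G : Type*} [Monoid G] (f : B → G) (i j : B) (p : ℕ) :
    ((alternatingWord i j (2 * p)).map f).prod = (f i * f j) ^ p := by
  induction p with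
  | zero => simp [alternatingWord]
  | succ p ih =>
    rw [show 2 * (p + 1) = 2 * p + 1 + 1 by ring, alternatingWord_succ', alternatingWord_succ',
      if_neg (by simp [parity_simps]), if_pos (by simp [parity_simps]), map_cons, map_cons,
      prod_cons, prod_cons, ih, pow_succ', mul_assoc]

theorem wordProd_alternatingWord_two_mul_M (i j : B) :
    π (alternatingWord i j (2 * M i j)) = 1 := by
  rw [prod_alternatingWord_eq_mul_pow, if_pos (even_two_mul _),
    Nat.mul_div_cancel_left _ two_pos, one_mul, simple_mul_simple_pow]

theorem leftInvSeq_alternatingWord_two_mul (i j : B) (p : ℕ) :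
    lis (alternatingWord i j (2 * p)) =
      (range (2 * p)).map fun k ↦ s i * (s j * s i) ^ k := by
  refine ext_getElem (by simp) fun k hk _ ↦ ?_
  rw [getElem_leftInvSeq_alternatingWord cs i j p k (by simpa using hk),
    prod_alternatingWord_eq_mul_pow, if_neg (by simp [parity_simps]), getElem_map,
    getElem_range, show (2 * k + 1) / 2 = k by omega]

theorem even_count_leftInvSeq_alternatingWord_two_mul_M [DecidableEq W] (i j : B) (t : W) :
    Even ((lis (alternatingWord i j (2 * M i j))).count t) := by
  have hperiod : ∀ k, s i * (s j * s i) ^ (M i j + k) = s i * (s j * s i) ^ k := by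
    intro k
    rw [pow_add, M.symmetric, simple_mul_simple_pow, one_mul]
  rw [leftInvSeq_alternatingWord_two_mul, two_mul, range_add, map_append, map_map]
  simp only [Function.comp_def, hperiod, count_append]
  exact ⟨_, rfl⟩

open Classical in
/-- The generators of Humphreys' action of `W` on pairs (reflection, sign), the sign written
additively. -/
noncomputable def signedConj (i : B) : Function.End (W × ZMod 2) :=
  fun p ↦ (s i * p.1 * s i, p.2 + if p.1 = s i then 1 else 0)

theorem prod_map_signedConj_apply [DecidableEq W] (ω : List B) (t : W) (a : ZMod 2) :
    (ω.map cs.signedConj).prod (t, a) =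
      (π ω * t * (π ω)⁻¹, a + (lis ω).count (π ω * t * (π ω)⁻¹)) := by
  induction ω with
  | nil => simp; rfl
  | cons i ω ih =>
    set t' := π ω * t * (π ω)⁻¹
    have hconj : π (i :: ω) * t * (π (i :: ω))⁻¹ = s i * t' * s i := by
      simp only [t', wordProd_cons, mul_inv_rev, inv_simple]; group
    have hcount : (lis (i :: ω)).count (s i * t' * s i) =
        (lis ω).count t' + if t' = s i then 1 else 0 := by
      rw [leftInvSeq, count_cons, ← count_map_of_injective _ _ (MulAut.conj (s i)).injective t']
      simp [inv_simple, mul_assoc, mul_eq_one_iff_eq_inv]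
    rw [map_cons, prod_cons]
    change cs.signedConj i _ = _
    rw [ih, hconj, hcount]
    simp [signedConj, add_assoc]

theorem isLiftable_signedConj : M.IsLiftable cs.signedConj := by
  classical
  intro i j
  funext ⟨t, a⟩
  rw [← prod_map_alternatingWord_two_mul, prod_map_signedConj_apply,
    wordProd_alternatingWord_two_mul_M, one_mul, inv_one, mul_one,
    (even_count_leftInvSeq_alternatingWord_two_mul_M cs i j t).natCast_zmod_two, add_zero]
  rfl

theorem count_leftInvSeq_cast_eq_of_wordProd_eq [DecidableEq W] {ω ω' : List B}
    (h : π ω = π ω') (t : W) : ((lis ω).count t : ZMod 2) = (lis ω').count t := by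
  have hprod : ∀ ν : List B,
      (ν.map cs.signedConj).prod = cs.lift ⟨_, cs.isLiftable_signedConj⟩ (π ν) := by
    intro ν
    simp [wordProd, map_list_prod, lift_apply_simple, map_map, Function.comp_def]
  have := congrArg Prod.snd (congrFun (((hprod ω).trans (h ▸ hprod ω').symm))
    ((π ω)⁻¹ * t * π ω, 0))
  simpa [prod_map_signedConj_apply, h, mul_assoc] using this

theorem simple_mem_leftInvSeq_of_isLeftDescent {ω : List B} {i : B}
    (h : cs.IsLeftDescent (π ω) i) : s i ∈ lis ω := by
  classical
  obtain ⟨ν, hν, hνω⟩ := cs.exists_isReduced (s i * π ω)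
  have hnot : s i ∉ lis ν := fun hmem ↦ by
    have := (cs.isLeftInversion_of_mem_leftInvSeq hν hmem).2
    rw [← hνω, simple_mul_simple_cancel_left] at this
    exact lt_asymm h this
  have hodd : ((lis (i :: ν)).count (s i) : ZMod 2) = 1 := by
    have hfix : MulAut.conj (s i) (s i) = s i := by simp
    have hconj := count_map_of_injective (lis ν) _ (MulAut.conj (s i)).injective (s i)
    rw [hfix] at hconj
    rw [leftInvSeq, count_cons, hconj, count_eq_zero_of_not_mem hnot]
    simp
  have := cs.count_leftInvSeq_cast_eq_of_wordProd_eq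
    (show π (i :: ν) = π ω by rw [wordProd_cons, ← hνω, simple_mul_simple_cancel_left]) (s i)
  by_contra hmem
  rw [hodd, count_eq_zero_of_not_mem hmem] at this
  exact absurd this (by decide)

theorem length_simple_mul_mul_simple_eq_add_two {w : W} {i : B} (hl : ¬cs.IsLeftDescent w i)
    (hr : ¬cs.IsRightDescent w i) (hc : s i * w ≠ w * s i) : ℓ (s i * w * s i) = ℓ w + 2 := by
  obtain ⟨ω, hω, rfl⟩ := cs.exists_isReduced w
  have hws : ¬cs.IsLeftDescent (π ω * s i) i := by
    intro hdesc
    have hmem := cs.simple_mem_leftInvSeq_of_isLeftDescent (ω := ω.concat i)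
      (by rwa [wordProd_concat])
    rw [leftInvSeq_concat, concat_eq_append, mem_append, mem_singleton] at hmem
    rcases hmem with hmem | hconj
    · exact hl (cs.isLeftInversion_of_mem_leftInvSeq hω hmem).2
    · exact hc (mul_inv_eq_iff_eq_mul.mp hconj.symm).symm
  unfold IsLeftDescent at hl hws
  unfold IsRightDescent at hr
  rw [mul_assoc]
  rcases cs.length_mul_simple (π ω) i with h | h <;>
    rcases cs.length_simple_mul (π ω * s i) i with h' | h' <;> omega

theorem length_mul_simple_of_mul_self {w : W} (hw : w * w = 1) (i : B) :
    ℓ (w * s i) = ℓ (s i * w) := by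
  rw [← length_inv, mul_inv_rev, inv_simple, inv_eq_of_mul_eq_one_left hw]

theorem length_lt_length_simple_mul_iff_of_mul_self {w : W} {i : B} (hw : w * w = 1)
    (hc : s i * w ≠ w * s i) : ℓ w < ℓ (s i * w) ↔ ℓ (s i * w) < ℓ (s i * w * s i) := by
  have hsym := cs.length_mul_simple_of_mul_self hw i
  constructor
  · intro h
    have := cs.length_simple_mul_mul_simple_eq_add_two (w := w) (i := i)
      (by unfold IsLeftDescent; omega) (by unfold IsRightDescent; omega) hc
    rcases cs.length_simple_mul w i with h' | h' <;> omega
  · intro h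
    by_contra hle
    have hlt : ℓ (s i * w) < ℓ w := lt_of_le_of_ne (not_lt.1 hle) (cs.length_simple_mul_ne w i)
    have hc' : w ≠ s i * w * s i := fun h' ↦
      hc (by rw [← cs.simple_mul_simple_cancel_right (w := s i * w) i, ← h'])
    have := cs.length_simple_mul_mul_simple_eq_add_two (w := s i * w) (i := i)
      (by unfold IsLeftDescent; rw [simple_mul_simple_cancel_left]; omega)
      (by unfold IsRightDescent; omega) (by rwa [simple_mul_simple_cancel_left])
    rw [simple_mul_simple_cancel_left] at this
    omega

theorem length_simple_mul_mul_simple_lt_of_mul_self {w : W} {i : B} (hw : w * w = 1)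
    (hc : s i * w ≠ w * s i) (h : ℓ (s i * w) < ℓ w) :
    ℓ (s i * w * s i) < ℓ (s i * w) := by
  have hasc := (cs.length_lt_length_simple_mul_iff_of_mul_self hw hc).not
  exact lt_of_le_of_ne (not_lt.1 (hasc.1 h.not_gt)) (cs.length_mul_simple_ne _ i)

theorem simple_mul_mul_self_of_commute {w : W} {i : B} (hw : w * w = 1)
    (hc : s i * w = w * s i) : s i * w * (s i * w) = 1 := by
  nth_rw 1 [hc]
  rw [mul_assoc, simple_mul_simple_cancel_left, hw]

theorem simple_mul_mul_simple_mul_self {w : W} (hw : w * w = 1) (i : B) :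
    s i * w * s i * (s i * w * s i) = 1 := by
  simp [mul_assoc, ← mul_assoc w w, hw]

end CoxeterSystem

namespace Module.End

variable {R N : Type*} [CommRing R] [AddCommGroup N] [Module R N]

theorem apply_apply_eq_of_add_self_eq_smul {f : Module.End R N} {e e' : N} {c c' q : R}
    (hq : c + c' = q + 1) (he : f e + e = c • (e + e')) (he' : f e' + e' = c' • (e' + e)) :
    f (f e) = (q - 1) • f e + q • e := by
  obtain rfl : q = c + c' - 1 := by rw [hq]; ring
  rw [eq_sub_of_add_eq he, map_sub, map_smul, map_add, eq_sub_of_add_eq he, eq_sub_of_add_eq he']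
  module

theorem apply_apply_eq_of_mem_span {f : Module.End R N} {a b : R} {S : Set N}
    (hS : ∀ v ∈ S, f (f v) = a • f v + b • v) {m : N} (hm : m ∈ Submodule.span R S) :
    f (f m) = a • f m + b • m := by
  have hker : Submodule.span R S ≤ LinearMap.ker (f * f - a • f - b • 1) :=
    Submodule.span_le.mpr fun v hv ↦ by simp [hS v hv]
  simpa [sub_eq_zero, sub_sub] using hker hm

end Module.End

open Finsupp LaurentPolynomial CoxeterSystem Module.End

/-- Here `u = T 1` in `ℤ[T;T⁻¹]`, and `M` is the span of the `single w 1`, `w` an involution. -/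
theorem hecke_module_quadratic_relation {B W : Type*} [Group W] {M : CoxeterMatrix B}
    (cs : CoxeterSystem M W)
    (Ts : B → Module.End (LaurentPolynomial ℤ) (W →₀ LaurentPolynomial ℤ))
    (h1 : ∀ (i : B) (w : W), w * w = 1 →
      cs.simple i * w = w * cs.simple i →
      cs.length w < cs.length (cs.simple i * w) →
      Ts i (single w 1) + single w 1 =
        (T 1 + 1 : LaurentPolynomial ℤ) • (single w 1 + single (cs.simple i * w) 1))
    (h2 : ∀ (i : B) (w : W), w * w = 1 →
      cs.simple i * w = w * cs.simple i →
      cs.length (cs.simple i * w) < cs.length w →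
      Ts i (single w 1) + single w 1 =
        (T 2 - T 1 : LaurentPolynomial ℤ) • (single w 1 + single (cs.simple i * w) 1))
    (h3 : ∀ (i : B) (w : W), w * w = 1 →
      cs.simple i * w ≠ w * cs.simple i →
      cs.length w < cs.length (cs.simple i * w) →
      Ts i (single w 1) + single w 1 =
        single w 1 + single (cs.simple i * w * cs.simple i) 1)
    (h4 : ∀ (i : B) (w : W), w * w = 1 →
      cs.simple i * w ≠ w * cs.simple i →
      cs.length (cs.simple i * w) < cs.length w →
      Ts i (single w 1) + single w 1 =
        (T 2 : LaurentPolynomial ℤ) • (single w 1 + single (cs.simple i * w * cs.simple i) 1)) :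
    ∀ (i : B) (m : W →₀ LaurentPolynomial ℤ),
      m ∈ Submodule.span (LaurentPolynomial ℤ)
        (Set.range (fun w : {w : W // w * w = 1} => single (w : W) (1 : LaurentPolynomial ℤ))) →
      Ts i (Ts i m) = (T 2 - 1 : LaurentPolynomial ℤ) • Ts i m
        + (T 2 : LaurentPolynomial ℤ) • m := by
  intro i m hm
  refine apply_apply_eq_of_mem_span ?_ hm
  rintro _ ⟨⟨w, hw⟩, rfl⟩
  have hcancel := cs.simple_mul_simple_cancel_left (w := w) i
  by_cases hc : cs.simple i * w = w * cs.simple i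
  · have hsw := cs.simple_mul_mul_self_of_commute hw hc
    have hcsw : cs.simple i * (cs.simple i * w) = cs.simple i * w * cs.simple i := by
      rw [hcancel, hc, mul_assoc, simple_mul_simple_self, mul_one]
    rcases lt_or_gt_of_ne (cs.length_simple_mul_ne w i) with hlt | hgt
    · refine apply_apply_eq_of_add_self_eq_smul (c' := T 1 + 1) (by ring) (h2 i w hw hc hlt) ?_
      simpa only [hcancel] using h1 i _ hsw hcsw (by rwa [hcancel])
    · refine apply_apply_eq_of_add_self_eq_smul (c' := T 2 - T 1) (by ring) (h1 i w hw hc hgt) ?_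
      simpa only [hcancel] using h2 i _ hsw hcsw (by rwa [hcancel])
  · have hsws : cs.simple i * (cs.simple i * w * cs.simple i) = w * cs.simple i := by
      simp [mul_assoc]
    have hback : cs.simple i * (cs.simple i * w * cs.simple i) * cs.simple i = w := by
      rw [hsws, simple_mul_simple_cancel_right]
    have hcsws : cs.simple i * (cs.simple i * w * cs.simple i)
        ≠ cs.simple i * w * cs.simple i * cs.simple i := by
      rw [hsws, simple_mul_simple_cancel_right]; exact Ne.symm hc
    have hinv := cs.simple_mul_mul_simple_mul_self hw i
    rcases lt_or_gt_of_ne (cs.length_simple_mul_ne w i) with hlt | hgt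
    · refine apply_apply_eq_of_add_self_eq_smul (c' := 1) (by ring) (h4 i w hw hc hlt) ?_
      simpa only [hback, one_smul] using h3 i _ hinv hcsws (by
        rw [hsws, cs.length_mul_simple_of_mul_self hw]
        exact cs.length_simple_mul_mul_simple_lt_of_mul_self hw hc hlt)
    · refine apply_apply_eq_of_add_self_eq_smul (c := 1) (c' := T 2) (by ring)
        (by rw [one_smul]; exact h3 i w hw hc hgt) ?_
      simpa only [hback] using h4 i _ hinv hcsws (by
        rw [hsws, cs.length_mul_simple_of_mul_self hw]
        exact (cs.length_lt_length_simple_mul_iff_of_mul_self hw hc).1 hgt)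
end

section
/- Let W be a Weyl group of rank 2 (dihedral Weyl group) with simple reflections s, t, let I be its set of involutions, and let M be the free ℤ[u,u⁻¹]-module with basis (a_w)_{w∈I} with operators T_s, T_t defined as in the Hecke module structure: (T_r+1)(a_w) = (u+1)(a_w + a_{rw}) if rw = wr > w; (T_r+1)(a_w) = (u²-u)(a_w + a_{rw}) if rw = wr < w; (T_r+1)(a_w) = a_w + a_{rwr} if rw ≠ wr > w; (T_r+1)(a_w) = u²(a_w + a_{rwr}) if rw ≠ wr < w, for r ∈ {s,t}. If st has order k in W, then the braid relation T_s T_t T_s ⋯ = T_t T_s T_t ⋯ (k factors on each side) holds as operators on M. -/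
/-!
With `z = st` of order `k`, the group `W` consists of the rotations `zʲ` and the reflections
`zʲs` (`j < k`), so its involutions are `1`, the reflections and, for even `k`, the longest
element `z^(k/2)`. Their lengths, `2 min(j, k-j)` and `2 min(j, k-1-j) + 1`, are bounded above by
explicit alternating words and below by a length function on the dihedral group of order `2k`
onto which `W` maps; they decide which of the four formulas defines `T_s` and `T_t` on each basis
vector. The braid relation is then, for each `k ∈ {2, 3, 4, 6}`, an identity between explicit
operators on a free module of rank `k + 1` or `k + 2`, verified by direct computation.
-/

open Finsupp LaurentPolynomial

namespace ZMod

variable {n : ℕ}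

lemma natAbs_valMinAbs_one_le : (1 : ZMod n).valMinAbs.natAbs ≤ 1 := by
  rcases n with _ | n
  · rfl
  · rw [valMinAbs_natAbs_eq_min]
    exact (min_le_left _ _).trans ((val_one_eq_one_mod _).trans_le (Nat.mod_le _ _))

lemma natAbs_valMinAbs_add_one_le (x : ZMod n) :
    (x + 1).valMinAbs.natAbs ≤ x.valMinAbs.natAbs + 1 :=
  (natAbs_valMinAbs_add_le x 1).trans <|
    (Int.natAbs_add_le _ _).trans (Nat.add_le_add_left natAbs_valMinAbs_one_le _)

lemma natAbs_valMinAbs_sub_one_le (x : ZMod n) :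
    (x - 1).valMinAbs.natAbs ≤ x.valMinAbs.natAbs + 1 := by
  rw [← natAbs_valMinAbs_neg, neg_sub', sub_neg_eq_add, ← natAbs_valMinAbs_neg x]
  exact natAbs_valMinAbs_add_one_le (-x)

lemma natAbs_valMinAbs_natCast {j : ℕ} (hj : j ≤ n) :
    (j : ZMod n).valMinAbs.natAbs = min j (n - j) := by
  rcases hj.lt_or_eq with hj | rfl
  · have : NeZero n := ⟨by omega⟩
    rw [valMinAbs_natAbs_eq_min, val_natCast_of_lt hj]
  · simp

end ZMod

namespace DihedralGroup

variable {n : ℕ}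

/-- The word length with respect to the generators `sr 0` and `sr 1`. -/
def coxeterLength : DihedralGroup n → ℕ
  | r m => 2 * m.valMinAbs.natAbs
  | sr m => 2 * min m.valMinAbs.natAbs (m - 1).valMinAbs.natAbs + 1

lemma coxeterLength_sr_mul_le (i : Fin 2) (d : DihedralGroup n) :
    coxeterLength (sr (i.val : ZMod n) * d) ≤ coxeterLength d + 1 := by
  fin_cases i <;> cases d with
  | r m => simp [coxeterLength, sr_mul_r]
  | sr m =>
    have h₁ := ZMod.natAbs_valMinAbs_add_one_le (m - 1)
    have h₂ := ZMod.natAbs_valMinAbs_sub_one_le m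
    rw [sub_add_cancel] at h₁
    simp [coxeterLength, sr_mul_sr]
    omega

end DihedralGroup

open DihedralGroup in
lemma CoxeterMatrix.isLiftable_sr {M : CoxeterMatrix (Fin 2)} {k : ℕ} (hk : k ∣ M 0 1) :
    M.IsLiftable (fun i : Fin 2 => sr (i.val : ZMod k)) := by
  have h01 : ((M 0 1 : ℕ) : ZMod k) = 0 := (ZMod.natCast_eq_zero_iff _ _).mpr hk
  have h10 : ((M 1 0 : ℕ) : ZMod k) = 0 := M.symmetric 1 0 ▸ h01
  intro i i'
  fin_cases i <;> fin_cases i' <;> simp [sr_mul_sr, r_pow, h01, h10]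

namespace CoxeterSystem

open DihedralGroup

variable {W : Type*} [Group W] {M : CoxeterMatrix (Fin 2)} (cs : CoxeterSystem M W)

local notation "s" => cs.simple 0
local notation "t" => cs.simple 1
local notation "z" => cs.simple 0 * cs.simple 1

def toDihedralGroup {k : ℕ} (hk : k ∣ M 0 1) : W →* DihedralGroup k :=
  cs.lift ⟨_, M.isLiftable_sr hk⟩

lemma toDihedralGroup_simple {k : ℕ} (hk : k ∣ M 0 1) (i : Fin 2) :
    cs.toDihedralGroup hk (cs.simple i) = sr (i.val : ZMod k) :=
  cs.lift_apply_simple (M.isLiftable_sr hk) i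

lemma coxeterLength_toDihedralGroup_le {k : ℕ} (hk : k ∣ M 0 1) (w : W) :
    coxeterLength (cs.toDihedralGroup hk w) ≤ cs.length w := by
  obtain ⟨ω, hω, rfl⟩ := cs.exists_isReduced w
  rw [hω.eq]
  clear hω
  induction ω with
  | nil => simp [coxeterLength, ← r_zero]
  | cons i ω ih =>
    rw [cs.wordProd_cons, map_mul, toDihedralGroup_simple, List.length_cons]
    exact (coxeterLength_sr_mul_le i _).trans (Nat.add_le_add_right ih 1)

lemma toDihedralGroup_simple_mul_simple_pow {k : ℕ} (hk : k ∣ M 0 1) (j : ℕ) :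
    cs.toDihedralGroup hk (z ^ j) = r (j : ZMod k) := by
  simp [toDihedralGroup_simple, sr_mul_sr]

lemma toDihedralGroup_simple_mul_simple_pow_mul_simple {k : ℕ} (hk : k ∣ M 0 1) (j : ℕ) :
    cs.toDihedralGroup hk (z ^ j * s) = sr (-(j : ZMod k)) := by
  simp [toDihedralGroup_simple, sr_mul_sr, r_mul_sr]

lemma length_simple_mul_simple_pow_le (j : ℕ) : cs.length (z ^ j) ≤ 2 * j := by
  induction j with
  | zero => simp
  | succ j ih =>
    have hz : cs.length z ≤ 2 := by
      simpa [cs.length_simple] using cs.length_mul_le s t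
    rw [pow_succ]
    exact (cs.length_mul_le _ _).trans (by omega)

lemma simple_zero_mul_pow_eq_inv (j : ℕ) : s * z ^ j = (z ^ j)⁻¹ * s := by
  have h : SemiconjBy s z z⁻¹ := by
    rw [SemiconjBy, mul_inv_rev, cs.inv_simple, cs.inv_simple, ← mul_assoc,
      cs.simple_mul_simple_self, one_mul, mul_assoc, cs.simple_mul_simple_self, mul_one]
  rw [(h.pow_right j).eq, inv_pow]

lemma pow_mul_simple_mul_self (j : ℕ) : z ^ j * s * (z ^ j * s) = 1 := by
  rw [mul_assoc, ← mul_assoc s, cs.simple_zero_mul_pow_eq_inv, mul_assoc,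
    cs.simple_mul_simple_self, mul_one, mul_inv_cancel]

lemma pow_mul_simple_one (j : ℕ) : z ^ j * s * t = z ^ (j + 1) := by
  rw [mul_assoc, pow_succ]

lemma pow_succ_mul_simple_one (j : ℕ) : z ^ (j + 1) * t = z ^ j * s := by
  rw [pow_succ, mul_assoc, cs.simple_mul_simple_cancel_right]

section OrderOf

variable {k : ℕ} (hk : orderOf (cs.simple 0 * cs.simple 1) = k)
include hk

lemma dvd_coxeterMatrix : k ∣ M 0 1 :=
  hk ▸ orderOf_dvd_of_pow_eq_one (cs.simple_mul_simple_pow 0 1)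

lemma simple_mul_simple_pow_eq_one : z ^ k = 1 := hk ▸ pow_orderOf_eq_one _

lemma inv_simple_mul_simple_pow {j j' : ℕ} (h : j + j' = k) : (z ^ j)⁻¹ = z ^ j' :=
  inv_eq_of_mul_eq_one_right (by rw [← pow_add, h, cs.simple_mul_simple_pow_eq_one hk])

lemma simple_mul_simple_pow_ne {j j' : ℕ} (hj : j < k) (hj' : j' < k) (h : j ≠ j') :
    z ^ j ≠ z ^ j' :=
  fun he => h (pow_injOn_Iio_orderOf (hk ▸ hj) (hk ▸ hj') he)

lemma simple_zero_mul_pow {j j' : ℕ} (h : j + j' = k) : s * z ^ j = z ^ j' * s := by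
  rw [cs.simple_zero_mul_pow_eq_inv, cs.inv_simple_mul_simple_pow hk h]

lemma simple_one_mul_pow {j j' : ℕ} (h : j + j' + 1 = k) : t * z ^ j = z ^ j' * s := by
  have ht : t * z ^ j = s * z ^ (j + 1) := by
    rw [pow_succ', ← mul_assoc, ← mul_assoc, cs.simple_mul_simple_self, one_mul]
  rw [ht, cs.simple_zero_mul_pow hk (by omega : j + 1 + j' = k)]

lemma simple_zero_mul_pow_mul {j j' : ℕ} (h : j + j' = k) : s * (z ^ j * s) = z ^ j' := by
  rw [← mul_assoc, cs.simple_zero_mul_pow hk h, cs.simple_mul_simple_cancel_right]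

lemma simple_one_mul_pow_mul {j j' : ℕ} (h : j + j' + 1 = k) : t * (z ^ j * s) = z ^ j' := by
  rw [← mul_assoc, cs.simple_one_mul_pow hk h, cs.simple_mul_simple_cancel_right]

lemma length_simple_mul_simple_pow {j : ℕ} (hj : j ≤ k) :
    cs.length (z ^ j) = 2 * min j (k - j) := by
  have hupper : cs.length (z ^ j) ≤ 2 * (k - j) := by
    rw [← cs.inv_simple_mul_simple_pow hk (Nat.sub_add_cancel hj), cs.length_inv]
    exact cs.length_simple_mul_simple_pow_le _
  have hlower := cs.coxeterLength_toDihedralGroup_le (cs.dvd_coxeterMatrix hk) (z ^ j)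
  rw [toDihedralGroup_simple_mul_simple_pow, coxeterLength,
    ZMod.natAbs_valMinAbs_natCast hj] at hlower
  have := cs.length_simple_mul_simple_pow_le j
  omega

lemma length_simple_mul_simple_pow_mul_simple {j : ℕ} (hj : j < k) :
    cs.length (z ^ j * s) = 2 * min j (k - 1 - j) + 1 := by
  have hupper₁ : cs.length (z ^ j * s) ≤ 2 * j + 1 := by
    have := cs.length_mul_le (z ^ j) s
    have := cs.length_simple_mul_simple_pow_le j
    rw [cs.length_simple] at *
    omega
  have hupper₂ : cs.length (z ^ j * s) ≤ 2 * (k - 1 - j) + 1 := by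
    rw [← cs.simple_one_mul_pow hk (by omega : k - 1 - j + j + 1 = k)]
    have := cs.length_mul_le t (z ^ (k - 1 - j))
    have := cs.length_simple_mul_simple_pow_le (k - 1 - j)
    rw [cs.length_simple] at *
    omega
  have hlower := cs.coxeterLength_toDihedralGroup_le (cs.dvd_coxeterMatrix hk) (z ^ j * s)
  rw [toDihedralGroup_simple_mul_simple_pow_mul_simple, coxeterLength, ZMod.natAbs_valMinAbs_neg,
    ← neg_add', ZMod.natAbs_valMinAbs_neg, ← Nat.cast_succ, ZMod.natAbs_valMinAbs_natCast hj.le,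
    ZMod.natAbs_valMinAbs_natCast hj] at hlower
  omega

lemma exists_eq_pow_or_eq_pow_mul_simple (hk₀ : 0 < k) (w : W) :
    ∃ j < k, w = z ^ j ∨ w = z ^ j * s := by
  induction w using cs.simple_induction_left with
  | one => exact ⟨0, hk₀, .inl (pow_zero _).symm⟩
  | mul_simple_left w i ih =>
    obtain ⟨j, hj, rfl | rfl⟩ := ih <;> fin_cases i
    · refine ⟨(k - j) % k, Nat.mod_lt _ hk₀, .inr ?_⟩
      rw [← hk, pow_mod_orderOf, hk]
      exact cs.simple_zero_mul_pow hk (by omega)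
    · exact ⟨k - j - 1, by omega, .inr (cs.simple_one_mul_pow hk (by omega))⟩
    · refine ⟨(k - j) % k, Nat.mod_lt _ hk₀, .inl ?_⟩
      rw [← hk, pow_mod_orderOf, hk]
      exact cs.simple_zero_mul_pow_mul hk (by omega)
    · exact ⟨k - j - 1, by omega, .inl (cs.simple_one_mul_pow_mul hk (by omega))⟩

lemma involution_cases (hk₀ : 0 < k) {w : W} (hw : w * w = 1) :
    w = 1 ∨ (∃ j, j + j = k ∧ w = z ^ j) ∨ ∃ j < k, w = z ^ j * s := by
  obtain ⟨j, hj, rfl | rfl⟩ := cs.exists_eq_pow_or_eq_pow_mul_simple hk hk₀ w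
  · rw [← pow_add] at hw
    obtain ⟨c, hc⟩ := hk ▸ orderOf_dvd_of_pow_eq_one hw
    have hc2 : c < 2 := by nlinarith
    interval_cases c
    · exact .inl (by rw [(by omega : j = 0), pow_zero])
    · exact .inr (.inl ⟨j, by omega, rfl⟩)
  · exact .inr (.inr ⟨j, hj, rfl⟩)

end OrderOf

end CoxeterSystem

section BraidFormulas

variable {R V : Type*} [CommRing R] [AddCommGroup V] [Module R V] (u : R) (F G : Module.End R V)

/- `e`, `w₀` and `rⱼ` stand for the basis vectors `a_1`, `a_{w₀}` and `a_{(st)ʲs}`, and `F`, `G`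
for `T_s`, `T_t`. -/

theorem braid_two_of_formulas (e w₀ r₀ r₁ : V)
    (hFe : F e = u • e + (u + 1) • r₀)
    (hFw₀ : F w₀ = (u ^ 2 - u - 1) • w₀ + (u ^ 2 - u) • r₁)
    (hFr₀ : F r₀ = (u ^ 2 - u - 1) • r₀ + (u ^ 2 - u) • e)
    (hFr₁ : F r₁ = u • r₁ + (u + 1) • w₀)
    (hGe : G e = u • e + (u + 1) • r₁)
    (hGw₀ : G w₀ = (u ^ 2 - u - 1) • w₀ + (u ^ 2 - u) • r₀)
    (hGr₀ : G r₀ = u • r₀ + (u + 1) • w₀)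
    (hGr₁ : G r₁ = (u ^ 2 - u - 1) • r₁ + (u ^ 2 - u) • e) :
    ∀ x ∈ [e, w₀, r₀, r₁], F (G x) = G (F x) := by
  intro x hx
  simp only [List.mem_cons, List.not_mem_nil, or_false] at hx
  rcases hx with rfl | rfl | rfl | rfl <;>
    simp only [hFe, hFw₀, hFr₀, hFr₁, hGe, hGw₀, hGr₀, hGr₁, map_add, map_smul,
      smul_add, smul_smul] <;> module

theorem braid_three_of_formulas (e r₀ r₁ r₂ : V)
    (hFe : F e = u • e + (u + 1) • r₀)
    (hFr₀ : F r₀ = (u ^ 2 - u - 1) • r₀ + (u ^ 2 - u) • e)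
    (hFr₁ : F r₁ = (u ^ 2 - 1) • r₁ + u ^ 2 • r₂)
    (hFr₂ : F r₂ = r₁)
    (hGe : G e = u • e + (u + 1) • r₂)
    (hGr₀ : G r₀ = r₁)
    (hGr₁ : G r₁ = (u ^ 2 - 1) • r₁ + u ^ 2 • r₀)
    (hGr₂ : G r₂ = (u ^ 2 - u - 1) • r₂ + (u ^ 2 - u) • e) :
    ∀ x ∈ [e, r₀, r₁, r₂], F (G (F x)) = G (F (G x)) := by
  intro x hx
  simp only [List.mem_cons, List.not_mem_nil, or_false] at hx
  rcases hx with rfl | rfl | rfl | rfl <;>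
    simp only [hFe, hFr₀, hFr₁, hFr₂, hGe, hGr₀, hGr₁, hGr₂, map_add, map_smul,
      smul_add, smul_smul] <;> module

theorem braid_four_of_formulas (e w₀ r₀ r₁ r₂ r₃ : V)
    (hFe : F e = u • e + (u + 1) • r₀)
    (hFw₀ : F w₀ = (u ^ 2 - u - 1) • w₀ + (u ^ 2 - u) • r₂)
    (hFr₀ : F r₀ = (u ^ 2 - u - 1) • r₀ + (u ^ 2 - u) • e)
    (hFr₁ : F r₁ = (u ^ 2 - 1) • r₁ + u ^ 2 • r₃)
    (hFr₂ : F r₂ = u • r₂ + (u + 1) • w₀)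
    (hFr₃ : F r₃ = r₁)
    (hGe : G e = u • e + (u + 1) • r₃)
    (hGw₀ : G w₀ = (u ^ 2 - u - 1) • w₀ + (u ^ 2 - u) • r₁)
    (hGr₀ : G r₀ = r₂)
    (hGr₁ : G r₁ = u • r₁ + (u + 1) • w₀)
    (hGr₂ : G r₂ = (u ^ 2 - 1) • r₂ + u ^ 2 • r₀)
    (hGr₃ : G r₃ = (u ^ 2 - u - 1) • r₃ + (u ^ 2 - u) • e) :
    ∀ x ∈ [e, w₀, r₀, r₁, r₂, r₃], F (G (F (G x))) = G (F (G (F x))) := by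
  intro x hx
  simp only [List.mem_cons, List.not_mem_nil, or_false] at hx
  rcases hx with rfl | rfl | rfl | rfl | rfl | rfl <;>
    simp only [hFe, hFw₀, hFr₀, hFr₁, hFr₂, hFr₃,
      hGe, hGw₀, hGr₀, hGr₁, hGr₂, hGr₃, map_add, map_smul, smul_add, smul_smul] <;> module

theorem braid_six_of_formulas (e w₀ r₀ r₁ r₂ r₃ r₄ r₅ : V)
    (hFe : F e = u • e + (u + 1) • r₀)
    (hFw₀ : F w₀ = (u ^ 2 - u - 1) • w₀ + (u ^ 2 - u) • r₃)
    (hFr₀ : F r₀ = (u ^ 2 - u - 1) • r₀ + (u ^ 2 - u) • e)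
    (hFr₁ : F r₁ = (u ^ 2 - 1) • r₁ + u ^ 2 • r₅)
    (hFr₂ : F r₂ = (u ^ 2 - 1) • r₂ + u ^ 2 • r₄)
    (hFr₃ : F r₃ = u • r₃ + (u + 1) • w₀)
    (hFr₄ : F r₄ = r₂)
    (hFr₅ : F r₅ = r₁)
    (hGe : G e = u • e + (u + 1) • r₅)
    (hGw₀ : G w₀ = (u ^ 2 - u - 1) • w₀ + (u ^ 2 - u) • r₂)
    (hGr₀ : G r₀ = r₄)
    (hGr₁ : G r₁ = r₃)
    (hGr₂ : G r₂ = u • r₂ + (u + 1) • w₀)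
    (hGr₃ : G r₃ = (u ^ 2 - 1) • r₃ + u ^ 2 • r₁)
    (hGr₄ : G r₄ = (u ^ 2 - 1) • r₄ + u ^ 2 • r₀)
    (hGr₅ : G r₅ = (u ^ 2 - u - 1) • r₅ + (u ^ 2 - u) • e) :
    ∀ x ∈ [e, w₀, r₀, r₁, r₂, r₃, r₄, r₅],
      F (G (F (G (F (G x))))) = G (F (G (F (G (F x))))) := by
  intro x hx
  simp only [List.mem_cons, List.not_mem_nil, or_false] at hx
  rcases hx with rfl | rfl | rfl | rfl | rfl | rfl | rfl | rfl <;>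
    simp only [hFe, hFw₀, hFr₀, hFr₁, hFr₂, hFr₃, hFr₄, hFr₅,
      hGe, hGw₀, hGr₀, hGr₁, hGr₂, hGr₃, hGr₄, hGr₅,
      map_add, map_smul, smul_add, smul_smul] <;> module

end BraidFormulas

lemma LaurentPolynomial.T_one_sq {R : Type*} [Semiring R] : (T 1 : R[T;T⁻¹]) ^ 2 = T 2 := by
  rw [T_pow]; norm_num

section HeckeAction

variable {B W : Type*} [Group W] {M : CoxeterMatrix B} (cs : CoxeterSystem M W)

local notation "u" => (T 1 : LaurentPolynomial ℤ)

structure IsInvolutionHeckeAction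
    (Top : B → Module.End (LaurentPolynomial ℤ) (W →₀ LaurentPolynomial ℤ)) : Prop where
  ascent_commute : ∀ (i : B) (w : W), w * w = 1 →
    cs.simple i * w = w * cs.simple i →
    cs.length w < cs.length (cs.simple i * w) →
    Top i (single w 1) + single w 1 =
      (T 1 + 1 : LaurentPolynomial ℤ) • (single w 1 + single (cs.simple i * w) 1)
  descent_commute : ∀ (i : B) (w : W), w * w = 1 →
    cs.simple i * w = w * cs.simple i →
    cs.length (cs.simple i * w) < cs.length w →
    Top i (single w 1) + single w 1 =
      (T 2 - T 1 : LaurentPolynomial ℤ) • (single w 1 + single (cs.simple i * w) 1)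
  ascent_twist : ∀ (i : B) (w : W), w * w = 1 →
    cs.simple i * w ≠ w * cs.simple i →
    cs.length w < cs.length (cs.simple i * w) →
    Top i (single w 1) + single w 1 =
      single w 1 + single (cs.simple i * w * cs.simple i) 1
  descent_twist : ∀ (i : B) (w : W), w * w = 1 →
    cs.simple i * w ≠ w * cs.simple i →
    cs.length (cs.simple i * w) < cs.length w →
    Top i (single w 1) + single w 1 =
      (T 2 : LaurentPolynomial ℤ) • (single w 1 + single (cs.simple i * w * cs.simple i) 1)

namespace IsInvolutionHeckeAction

variable {cs} {Top : B → Module.End (LaurentPolynomial ℤ) (W →₀ LaurentPolynomial ℤ)}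
  (hT : IsInvolutionHeckeAction cs Top) {i : B} {w v : W}
include hT

lemma apply_of_ascent_commute (hw : w * w = 1) (hc : cs.simple i * w = w * cs.simple i)
    (hl : cs.length w < cs.length (cs.simple i * w)) (hv : cs.simple i * w = v) :
    Top i (single w 1) = u • single w 1 + (u + 1) • single v 1 := by
  rw [eq_sub_of_add_eq (hT.ascent_commute i w hw hc hl), hv]
  module

lemma apply_of_descent_commute (hw : w * w = 1) (hc : cs.simple i * w = w * cs.simple i)
    (hl : cs.length (cs.simple i * w) < cs.length w) (hv : cs.simple i * w = v) :
    Top i (single w 1) = (u ^ 2 - u - 1) • single w 1 + (u ^ 2 - u) • single v 1 := by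
  rw [eq_sub_of_add_eq (hT.descent_commute i w hw hc hl), hv, T_one_sq]
  module

lemma apply_of_ascent_twist (hw : w * w = 1) (hc : cs.simple i * w ≠ w * cs.simple i)
    (hl : cs.length w < cs.length (cs.simple i * w)) (hv : cs.simple i * w * cs.simple i = v) :
    Top i (single w 1) = single v 1 := by
  rw [eq_sub_of_add_eq (hT.ascent_twist i w hw hc hl), hv, add_sub_cancel_left]

lemma apply_of_descent_twist (hw : w * w = 1) (hc : cs.simple i * w ≠ w * cs.simple i)
    (hl : cs.length (cs.simple i * w) < cs.length w) (hv : cs.simple i * w * cs.simple i = v) :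
    Top i (single w 1) = (u ^ 2 - 1) • single w 1 + u ^ 2 • single v 1 := by
  rw [eq_sub_of_add_eq (hT.descent_twist i w hw hc hl), hv, T_one_sq]
  module

end IsInvolutionHeckeAction

end HeckeAction


namespace IsInvolutionHeckeAction

open CoxeterSystem

variable {W : Type*} [Group W] {M : CoxeterMatrix (Fin 2)} {cs : CoxeterSystem M W}
  {Top : Fin 2 → Module.End (LaurentPolynomial ℤ) (W →₀ LaurentPolynomial ℤ)}
  (hT : IsInvolutionHeckeAction cs Top)
include hT

local notation "s" => cs.simple 0
local notation "t" => cs.simple 1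
local notation "z" => cs.simple 0 * cs.simple 1
local notation "u" => (T 1 : LaurentPolynomial ℤ)

lemma apply_zero_one :
    Top 0 (single 1 1) = u • single 1 1 + (u + 1) • single (z ^ 0 * s) 1 :=
  hT.apply_of_ascent_commute (one_mul 1) (by rw [mul_one, one_mul])
    (by simp [cs.length_simple]) (by simp)

lemma apply_zero_reflection_zero :
    Top 0 (single (z ^ 0 * s) 1) =
      (u ^ 2 - u - 1) • single (z ^ 0 * s) 1 + (u ^ 2 - u) • single 1 1 := by
  rw [pow_zero, one_mul]
  exact hT.apply_of_descent_commute (cs.simple_mul_simple_self 0) rfl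
    (by simp [cs.length_simple]) (cs.simple_mul_simple_self 0)

section OrderOf

variable {k : ℕ} (hk : orderOf (cs.simple 0 * cs.simple 1) = k)
include hk

lemma apply_zero_reflection_of_lt {j j' : ℕ} (h : j + j' = k) (hj : 0 < j) (hjj' : j < j') :
    Top 0 (single (z ^ j * s) 1) =
      (u ^ 2 - 1) • single (z ^ j * s) 1 + u ^ 2 • single (z ^ j' * s) 1 := by
  have hs := cs.simple_zero_mul_pow_mul hk h
  refine hT.apply_of_descent_twist (cs.pow_mul_simple_mul_self j) ?_ ?_ (by rw [hs])
  · rw [hs, cs.simple_mul_simple_cancel_right]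
    exact cs.simple_mul_simple_pow_ne hk (by omega) (by omega) (by omega)
  · rw [hs, cs.length_simple_mul_simple_pow hk (by omega),
      cs.length_simple_mul_simple_pow_mul_simple hk (by omega)]
    omega

lemma apply_zero_reflection_of_gt {j j' : ℕ} (h : j + j' = k) (hj' : 0 < j') (hjj' : j' < j) :
    Top 0 (single (z ^ j * s) 1) = single (z ^ j' * s) 1 := by
  have hs := cs.simple_zero_mul_pow_mul hk h
  refine hT.apply_of_ascent_twist (cs.pow_mul_simple_mul_self j) ?_ ?_ (by rw [hs])
  · rw [hs, cs.simple_mul_simple_cancel_right]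
    exact cs.simple_mul_simple_pow_ne hk (by omega) (by omega) (by omega)
  · rw [hs, cs.length_simple_mul_simple_pow hk (by omega),
      cs.length_simple_mul_simple_pow_mul_simple hk (by omega)]
    omega

lemma apply_zero_reflection_of_eq {j : ℕ} (h : j + j = k) (hj : 0 < j) :
    Top 0 (single (z ^ j * s) 1) = u • single (z ^ j * s) 1 + (u + 1) • single (z ^ j) 1 := by
  have hs := cs.simple_zero_mul_pow_mul hk h
  refine hT.apply_of_ascent_commute (cs.pow_mul_simple_mul_self j) ?_ ?_ hs
  · rw [hs, cs.simple_mul_simple_cancel_right]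
  · rw [hs, cs.length_simple_mul_simple_pow hk (by omega),
      cs.length_simple_mul_simple_pow_mul_simple hk (by omega)]
    omega

lemma apply_zero_longest {j : ℕ} (h : j + j = k) (hj : 0 < j) :
    Top 0 (single (z ^ j) 1) =
      (u ^ 2 - u - 1) • single (z ^ j) 1 + (u ^ 2 - u) • single (z ^ j * s) 1 := by
  have hs := cs.simple_zero_mul_pow hk h
  refine hT.apply_of_descent_commute
    (by rw [← pow_add, h, cs.simple_mul_simple_pow_eq_one hk]) hs ?_ hs
  rw [hs, cs.length_simple_mul_simple_pow hk (by omega),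
    cs.length_simple_mul_simple_pow_mul_simple hk (by omega)]
  omega

lemma apply_one_one {j : ℕ} (h : j + 1 = k) :
    Top 1 (single 1 1) = u • single 1 1 + (u + 1) • single (z ^ j * s) 1 := by
  have ht : t = z ^ j * s := by
    rw [← cs.pow_succ_mul_simple_one, h, cs.simple_mul_simple_pow_eq_one hk, one_mul]
  refine hT.apply_of_ascent_commute (one_mul 1) (by rw [mul_one, one_mul]) ?_
    ((mul_one _).trans ht)
  simp [cs.length_simple]

lemma apply_one_reflection_last {j : ℕ} (h : j + 1 = k) :
    Top 1 (single (z ^ j * s) 1) =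
      (u ^ 2 - u - 1) • single (z ^ j * s) 1 + (u ^ 2 - u) • single 1 1 := by
  have ht := cs.simple_one_mul_pow_mul hk (j' := 0) (by omega)
  rw [pow_zero] at ht
  refine hT.apply_of_descent_commute (cs.pow_mul_simple_mul_self j) ?_ ?_ ht
  · rw [ht, cs.pow_mul_simple_one, h, cs.simple_mul_simple_pow_eq_one hk]
  · rw [ht, cs.length_one, cs.length_simple_mul_simple_pow_mul_simple hk (by omega)]
    omega

lemma apply_one_reflection_of_lt {j j' : ℕ} (h : j + j' + 2 = k) (hjj' : j < j') :
    Top 1 (single (z ^ j * s) 1) = single (z ^ j' * s) 1 := by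
  have ht := cs.simple_one_mul_pow_mul hk (j' := j' + 1) (by omega)
  refine hT.apply_of_ascent_twist (cs.pow_mul_simple_mul_self j) ?_ ?_
    (by rw [ht, cs.pow_succ_mul_simple_one])
  · rw [ht, cs.pow_mul_simple_one]
    exact cs.simple_mul_simple_pow_ne hk (by omega) (by omega) (by omega)
  · rw [ht, cs.length_simple_mul_simple_pow hk (by omega),
      cs.length_simple_mul_simple_pow_mul_simple hk (by omega)]
    omega

lemma apply_one_reflection_of_gt {j j' : ℕ} (h : j + j' + 2 = k) (hjj' : j' < j) :
    Top 1 (single (z ^ j * s) 1) =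
      (u ^ 2 - 1) • single (z ^ j * s) 1 + u ^ 2 • single (z ^ j' * s) 1 := by
  have ht := cs.simple_one_mul_pow_mul hk (j' := j' + 1) (by omega)
  refine hT.apply_of_descent_twist (cs.pow_mul_simple_mul_self j) ?_ ?_
    (by rw [ht, cs.pow_succ_mul_simple_one])
  · rw [ht, cs.pow_mul_simple_one]
    exact cs.simple_mul_simple_pow_ne hk (by omega) (by omega) (by omega)
  · rw [ht, cs.length_simple_mul_simple_pow hk (by omega),
      cs.length_simple_mul_simple_pow_mul_simple hk (by omega)]
    omega

lemma apply_one_reflection_of_eq {j : ℕ} (h : j + j + 2 = k) :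
    Top 1 (single (z ^ j * s) 1) =
      u • single (z ^ j * s) 1 + (u + 1) • single (z ^ (j + 1)) 1 := by
  have ht := cs.simple_one_mul_pow_mul hk (j' := j + 1) (by omega)
  refine hT.apply_of_ascent_commute (cs.pow_mul_simple_mul_self j) ?_ ?_ ht
  · rw [ht, cs.pow_mul_simple_one]
  · rw [ht, cs.length_simple_mul_simple_pow hk (by omega),
      cs.length_simple_mul_simple_pow_mul_simple hk (by omega)]
    omega

lemma apply_one_longest {j : ℕ} (h : j + j + 2 = k) :
    Top 1 (single (z ^ (j + 1)) 1) =
      (u ^ 2 - u - 1) • single (z ^ (j + 1)) 1 + (u ^ 2 - u) • single (z ^ j * s) 1 := by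
  have ht := cs.simple_one_mul_pow hk (j := j + 1) (j' := j) (by omega)
  refine hT.apply_of_descent_commute
    (by rw [← pow_add, (by omega : j + 1 + (j + 1) = k), cs.simple_mul_simple_pow_eq_one hk])
    (by rw [ht, cs.pow_succ_mul_simple_one]) ?_ ht
  rw [ht, cs.length_simple_mul_simple_pow hk (by omega),
    cs.length_simple_mul_simple_pow_mul_simple hk (by omega)]
  omega

end OrderOf

theorem braid_of_orderOf_eq_two (hk : orderOf (cs.simple 0 * cs.simple 1) = 2)
    {w : W} (hw : w * w = 1) :
    Top 0 (Top 1 (single w 1)) = Top 1 (Top 0 (single w 1)) := by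
  refine braid_two_of_formulas _ (Top 0) (Top 1) (single 1 1) (single (z ^ 1) 1)
    (single (z ^ 0 * s) 1) (single (z ^ 1 * s) 1)
    hT.apply_zero_one (hT.apply_zero_longest hk rfl (by norm_num)) hT.apply_zero_reflection_zero
    (hT.apply_zero_reflection_of_eq hk rfl (by norm_num))
    (hT.apply_one_one hk rfl) (hT.apply_one_longest hk rfl)
    (hT.apply_one_reflection_of_eq hk rfl) (hT.apply_one_reflection_last hk rfl) _ ?_
  rcases cs.involution_cases hk (by norm_num) hw with rfl | ⟨j, hj, rfl⟩ | ⟨j, hj, rfl⟩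
  · simp
  · obtain rfl : j = 1 := by omega
    simp
  · interval_cases j <;> simp

theorem braid_of_orderOf_eq_three (hk : orderOf (cs.simple 0 * cs.simple 1) = 3)
    {w : W} (hw : w * w = 1) :
    Top 0 (Top 1 (Top 0 (single w 1))) = Top 1 (Top 0 (Top 1 (single w 1))) := by
  refine braid_three_of_formulas _ (Top 0) (Top 1) (single 1 1)
    (single (z ^ 0 * s) 1) (single (z ^ 1 * s) 1) (single (z ^ 2 * s) 1)
    hT.apply_zero_one hT.apply_zero_reflection_zero
    (hT.apply_zero_reflection_of_lt hk (by norm_num) (by norm_num) (by norm_num))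
    (hT.apply_zero_reflection_of_gt hk (by norm_num) (by norm_num) (by norm_num))
    (hT.apply_one_one hk rfl)
    (hT.apply_one_reflection_of_lt hk (by norm_num) (by norm_num))
    (hT.apply_one_reflection_of_gt hk (by norm_num) (by norm_num))
    (hT.apply_one_reflection_last hk rfl) _ ?_
  rcases cs.involution_cases hk (by norm_num) hw with rfl | ⟨j, hj, rfl⟩ | ⟨j, hj, rfl⟩
  · simp
  · omega
  · interval_cases j <;> simp

theorem braid_of_orderOf_eq_four (hk : orderOf (cs.simple 0 * cs.simple 1) = 4)
    {w : W} (hw : w * w = 1) :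
    Top 0 (Top 1 (Top 0 (Top 1 (single w 1)))) =
      Top 1 (Top 0 (Top 1 (Top 0 (single w 1)))) := by
  refine braid_four_of_formulas _ (Top 0) (Top 1) (single 1 1) (single (z ^ 2) 1)
    (single (z ^ 0 * s) 1) (single (z ^ 1 * s) 1) (single (z ^ 2 * s) 1) (single (z ^ 3 * s) 1)
    hT.apply_zero_one (hT.apply_zero_longest hk rfl (by norm_num)) hT.apply_zero_reflection_zero
    (hT.apply_zero_reflection_of_lt hk (by norm_num) (by norm_num) (by norm_num))
    (hT.apply_zero_reflection_of_eq hk rfl (by norm_num))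
    (hT.apply_zero_reflection_of_gt hk (by norm_num) (by norm_num) (by norm_num))
    (hT.apply_one_one hk rfl) (hT.apply_one_longest hk rfl)
    (hT.apply_one_reflection_of_lt hk (by norm_num) (by norm_num))
    (hT.apply_one_reflection_of_eq hk rfl)
    (hT.apply_one_reflection_of_gt hk (by norm_num) (by norm_num))
    (hT.apply_one_reflection_last hk rfl) _ ?_
  rcases cs.involution_cases hk (by norm_num) hw with rfl | ⟨j, hj, rfl⟩ | ⟨j, hj, rfl⟩
  · simp
  · obtain rfl : j = 2 := by omega
    simp
  · interval_cases j <;> simp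

theorem braid_of_orderOf_eq_six (hk : orderOf (cs.simple 0 * cs.simple 1) = 6)
    {w : W} (hw : w * w = 1) :
    Top 0 (Top 1 (Top 0 (Top 1 (Top 0 (Top 1 (single w 1)))))) =
      Top 1 (Top 0 (Top 1 (Top 0 (Top 1 (Top 0 (single w 1)))))) := by
  refine braid_six_of_formulas _ (Top 0) (Top 1) (single 1 1) (single (z ^ 3) 1)
    (single (z ^ 0 * s) 1) (single (z ^ 1 * s) 1) (single (z ^ 2 * s) 1)
    (single (z ^ 3 * s) 1) (single (z ^ 4 * s) 1) (single (z ^ 5 * s) 1)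
    hT.apply_zero_one (hT.apply_zero_longest hk rfl (by norm_num)) hT.apply_zero_reflection_zero
    (hT.apply_zero_reflection_of_lt hk (by norm_num) (by norm_num) (by norm_num))
    (hT.apply_zero_reflection_of_lt hk (by norm_num) (by norm_num) (by norm_num))
    (hT.apply_zero_reflection_of_eq hk rfl (by norm_num))
    (hT.apply_zero_reflection_of_gt hk (by norm_num) (by norm_num) (by norm_num))
    (hT.apply_zero_reflection_of_gt hk (by norm_num) (by norm_num) (by norm_num))
    (hT.apply_one_one hk rfl) (hT.apply_one_longest hk rfl)
    (hT.apply_one_reflection_of_lt hk (by norm_num) (by norm_num))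
    (hT.apply_one_reflection_of_lt hk (by norm_num) (by norm_num))
    (hT.apply_one_reflection_of_eq hk rfl)
    (hT.apply_one_reflection_of_gt hk (by norm_num) (by norm_num))
    (hT.apply_one_reflection_of_gt hk (by norm_num) (by norm_num))
    (hT.apply_one_reflection_last hk rfl) _ ?_
  rcases cs.involution_cases hk (by norm_num) hw with rfl | ⟨j, hj, rfl⟩ | ⟨j, hj, rfl⟩
  · simp
  · obtain rfl : j = 3 := by omega
    simp
  · interval_cases j <;> simp

end IsInvolutionHeckeAction

/-- braid relation for the operators `T_s, T_t` on the free `ℤ[u,u⁻¹]`-module with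
basis the involutions of a dihedral Weyl group `W` of rank 2 (so the order `k` of `st` is
2, 3, 4 or 6): the alternating products `T_s T_t T_s ⋯ = T_t T_s T_t ⋯` (`k` factors each)
agree on `M` (the span of the basis vectors `a_w`, `w` an involution). -/
theorem hecke_module_braid_relation {W : Type*} [Group W] {M : CoxeterMatrix (Fin 2)}
    (cs : CoxeterSystem M W)
    (Top : Fin 2 → Module.End (LaurentPolynomial ℤ) (W →₀ LaurentPolynomial ℤ))
    (k : ℕ) (hk : orderOf (cs.simple 0 * cs.simple 1) = k)
    (hWeyl : k = 2 ∨ k = 3 ∨ k = 4 ∨ k = 6)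
    (h1 : ∀ (i : Fin 2) (w : W), w * w = 1 →
      cs.simple i * w = w * cs.simple i →
      cs.length w < cs.length (cs.simple i * w) →
      Top i (single w 1) + single w 1 =
        (T 1 + 1 : LaurentPolynomial ℤ) • (single w 1 + single (cs.simple i * w) 1))
    (h2 : ∀ (i : Fin 2) (w : W), w * w = 1 →
      cs.simple i * w = w * cs.simple i →
      cs.length (cs.simple i * w) < cs.length w →
      Top i (single w 1) + single w 1 =
        (T 2 - T 1 : LaurentPolynomial ℤ) • (single w 1 + single (cs.simple i * w) 1))
    (h3 : ∀ (i : Fin 2) (w : W), w * w = 1 →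
      cs.simple i * w ≠ w * cs.simple i →
      cs.length w < cs.length (cs.simple i * w) →
      Top i (single w 1) + single w 1 =
        single w 1 + single (cs.simple i * w * cs.simple i) 1)
    (h4 : ∀ (i : Fin 2) (w : W), w * w = 1 →
      cs.simple i * w ≠ w * cs.simple i →
      cs.length (cs.simple i * w) < cs.length w →
      Top i (single w 1) + single w 1 =
        (T 2 : LaurentPolynomial ℤ) • (single w 1 + single (cs.simple i * w * cs.simple i) 1)) :
    ∀ m : W →₀ LaurentPolynomial ℤ,
      m ∈ Submodule.span (LaurentPolynomial ℤ)
        (Set.range (fun w : {w : W // w * w = 1} => single (w : W) (1 : LaurentPolynomial ℤ))) →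
      ((List.range k).map (fun n => if n % 2 = 0 then Top 0 else Top 1)).prod m =
        ((List.range k).map (fun n => if n % 2 = 0 then Top 1 else Top 0)).prod m := by
  have hT : IsInvolutionHeckeAction cs Top := ⟨h1, h2, h3, h4⟩
  intro m hm
  refine LinearMap.eqOn_span' ?_ hm
  rintro _ ⟨⟨w, hw⟩, rfl⟩
  rcases hWeyl with rfl | rfl | rfl | rfl
  · simpa [List.range_succ] using hT.braid_of_orderOf_eq_two hk hw
  · simpa [List.range_succ] using hT.braid_of_orderOf_eq_three hk hw
  · simpa [List.range_succ] using hT.braid_of_orderOf_eq_four hk hw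
  · simpa [List.range_succ] using hT.braid_of_orderOf_eq_six hk hw
end

section
/- Let W be a Weyl group acting on its reflection representation R over ℚ, and for an involution w ∈ W let h(w) = dim R^{-w} be the dimension of the (-1)-eigenspace of w on R. If s ∈ S and w is an involution with sw = ws and l(sw) > l(w), then h(sw) ≥ h(w) + 1. -/
open Module

/-!
Write `t = ρ s` and `α` for the simple root of `s`. Since `w` commutes with `s`, `ρ w` preserves the
line `ℚ ∙ α = R^{-s}`, so `ρ w α = c • α`; as `w` is an involution `c = ± 1`, and `l(ws) > l(w)` makes
`ρ w α` a nonnegative combination of simple roots, so `c = 1`. Now if `ρ w v = -v`, the vector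
`v - t v` lies on the line `ℚ ∙ α`, which `ρ w` fixes pointwise, and is negated by `ρ w`; hence it
vanishes and `ρ (s w) v = -v`. So `R^{-w} ⊆ R^{-sw}`, and the inclusion is strict because
`α ∈ R^{-sw} \ R^{-w}`.
-/

lemma eq_zero_of_eq_neg (K : Type*) {V : Type*} [Field K] [NeZero (2 : K)] [AddCommGroup V]
    [Module K V] {x : V} (h : x = -x) : x = 0 := by
  have h2 : (2 : K) • x = 0 := by
    rw [two_smul]
    nth_rewrite 2 [h]
    exact add_neg_cancel x
  exact (smul_eq_zero.mp h2).resolve_left two_ne_zero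

namespace Module.End

variable {K V : Type*} [Field K] [AddCommGroup V] [Module K V]

lemma apply_eq_self_of_mul_self_eq_one_of_nonneg [LinearOrder K] [IsStrictOrderedRing K]
    {u : End K V} (hu : u * u = 1) {α : V} (hα : α ≠ 0) {c : K} (hc : 0 ≤ c)
    (huα : u α = c • α) : u α = α := by
  have hcc : (c * c) • α = (1 : K) • α := by
    rw [mul_smul, ← huα, ← map_smul, ← huα, ← mul_apply, hu, one_apply, one_smul]
  rcases mul_self_eq_one_iff.mp (smul_left_injective K hα hcc) with rfl | rfl
  · rw [huα, one_smul]
  · norm_num at hc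

variable [NeZero (2 : K)] {t u : End K V} {α : V}

lemma eigenspace_neg_one_le_mul (ht : t * t = 1) (hcomm : Commute t u)
    (htα : t.eigenspace (-1) = K ∙ α) (huα : u α = α) :
    u.eigenspace (-1) ≤ (t * u).eigenspace (-1) := by
  intro v hv
  rw [mem_eigenspace_iff, neg_one_smul] at hv ⊢
  have hline : v - t v ∈ K ∙ α := by
    rw [← htα, mem_eigenspace_iff, map_sub, ← mul_apply, ht, one_apply]
    module
  obtain ⟨d, hd⟩ := Submodule.mem_span_singleton.mp hline
  have hneg : u (v - t v) = -(v - t v) := by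
    rw [map_sub, hv, ← mul_apply, ← hcomm.eq, mul_apply, hv, map_neg]
    module
  rw [← hd, map_smul, huα] at hneg
  have htv : t v = v := (sub_eq_zero.mp (hd ▸ eq_zero_of_eq_neg K hneg)).symm
  rw [mul_apply, hv, map_neg, htv]

lemma eigenspace_neg_one_lt_mul (ht : t * t = 1) (hcomm : Commute t u)
    (htα : t.eigenspace (-1) = K ∙ α) (hα : α ≠ 0) (huα : u α = α) :
    u.eigenspace (-1) < (t * u).eigenspace (-1) := by
  have htα' : t α = -α := by
    rw [← neg_one_smul K α, ← mem_eigenspace_iff, htα]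
    exact Submodule.mem_span_singleton_self α
  refine SetLike.lt_iff_le_and_exists.mpr
    ⟨eigenspace_neg_one_le_mul ht hcomm htα huα, α, ?_, ?_⟩
  · rw [mem_eigenspace_iff, mul_apply, huα, htα', neg_one_smul]
  · rw [mem_eigenspace_iff, huα, neg_one_smul]
    exact fun h ↦ hα (eq_zero_of_eq_neg K h)

end Module.End

theorem dim_minus_one_eigenspace_increases_general {B W : Type*} [Group W]
    {M : CoxeterMatrix B} (cs : CoxeterSystem M W)
    (R : Type*) [AddCommGroup R] [Module ℚ R] [FiniteDimensional ℚ R]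
    (ρ : Representation ℚ W R)
    (bα : Basis B ℚ R)
    (hrefl : ∀ i : B, Module.End.eigenspace (ρ (cs.simple i)) (-1) = ℚ ∙ (bα i))
    (hpos : ∀ (w : W) (i : B), cs.length w < cs.length (w * cs.simple i) ↔
      ∀ j : B, 0 ≤ bα.repr (ρ w (bα i)) j)
    (i : B) (w : W) (hw : w * w = 1)
    (hc : cs.simple i * w = w * cs.simple i)
    (hl : cs.length w < cs.length (cs.simple i * w)) :
    Module.finrank ℚ (Module.End.eigenspace (ρ w) (-1)) + 1 ≤
      Module.finrank ℚ (Module.End.eigenspace (ρ (cs.simple i * w)) (-1)) := by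
  have hα : bα i ≠ 0 := bα.ne_zero i
  have hs : ρ (cs.simple i) * ρ (cs.simple i) = 1 := by
    rw [← map_mul, cs.simple_mul_simple_self, map_one]
  have hcomm : Commute (ρ (cs.simple i)) (ρ w) := by
    rw [Commute, SemiconjBy, ← map_mul, hc, map_mul]
  obtain ⟨c, hwα⟩ : ∃ c : ℚ, c • bα i = ρ w (bα i) := by
    rw [← Submodule.mem_span_singleton, ← hrefl i]
    have hmem : bα i ∈ Module.End.eigenspace (ρ (cs.simple i)) (-1) := by
      rw [hrefl i]
      exact Submodule.mem_span_singleton_self (bα i)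
    exact Module.End.mapsTo_genEigenspace_of_comm hcomm (-1) 1 hmem
  have hc_nonneg : 0 ≤ c := by
    simpa [← hwα] using (hpos w i).mp (hc ▸ hl) i
  have hwα' : ρ w (bα i) = bα i :=
    Module.End.apply_eq_self_of_mul_self_eq_one_of_nonneg
      (by rw [← map_mul, hw, map_one]) hα hc_nonneg hwα.symm
  rw [map_mul]
  exact Submodule.finrank_lt_finrank_of_lt
    (Module.End.eigenspace_neg_one_lt_mul hs hcomm (hrefl i) hα hwα')

/-- let `W` be a Weyl group acting on its reflection representation `R` over `ℚ`
(with simple roots `bα` forming a basis, `ρ(s_i)` a reflection with `(-1)`-eigenspace the line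
through `α_i`, and the standard positivity criterion for lengths), and for an involution `w`
let `h(w) = dim R^{-w}` be the dimension of the `(-1)`-eigenspace of `w`. If `s` is a simple
reflection and `w` an involution with `sw = ws` and `l(sw) > l(w)`, then `h(sw) ≥ h(w) + 1`. -/
theorem dim_minus_one_eigenspace_increases {B W : Type*} [Group W] [Finite W]
    {M : CoxeterMatrix B} (cs : CoxeterSystem M W)
    (R : Type*) [AddCommGroup R] [Module ℚ R] [FiniteDimensional ℚ R]
    (ρ : Representation ℚ W R) (hfaithful : Function.Injective ρ)
    (bα : Basis B ℚ R)
    (hrefl : ∀ i : B, Module.End.eigenspace (ρ (cs.simple i)) (-1) = ℚ ∙ (bα i))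
    (hpos : ∀ (w : W) (i : B), cs.length w < cs.length (w * cs.simple i) ↔
      ∀ j : B, 0 ≤ bα.repr (ρ w (bα i)) j)
    (i : B) (w : W) (hw : w * w = 1)
    (hc : cs.simple i * w = w * cs.simple i)
    (hl : cs.length w < cs.length (cs.simple i * w)) :
    Module.finrank ℚ (Module.End.eigenspace (ρ w) (-1)) + 1 ≤
      Module.finrank ℚ (Module.End.eigenspace (ρ (cs.simple i * w)) (-1)) :=
  dim_minus_one_eigenspace_increases_general cs R ρ bα hrefl hpos i w hw hc hl
end

section
/- Let W be a Weyl group, s ∈ S, and w an involution with sw = ws > w. Then the line R^{-s} (the (-1)-eigenspace of s on the reflection representation R) is contained in R^w (the fixed space of w), and R^{-w} is contained in R^s; consequently R^{-s} ⊕ R^{-w} ⊆ R^{-sw}. -/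
/-!
Since `w` commutes with `s`, it preserves the line `R^{-s} = ℚ α_s`, so `w α_s = c α_s` with
`c² = 1`; the length condition `ws > w` makes `c` the (nonnegative) `α_s`-coordinate of `w α_s`,
hence `c = 1` and `R^{-s} ⊆ R^w`. Conversely `s` preserves `R^{-w}`, and for `v ∈ R^{-w}` the
vector `v - s v` lies in `R^{-s} ⊆ R^w` and in `R^{-w}`, so it vanishes. The remaining claims
follow because `s w` acts by `-1` on `R^{-s} ∩ R^w` and on `R^s ∩ R^{-w}`.
-/

open Module

namespace Module.End

section CommRing

variable {R M : Type*} [CommRing R] [AddCommGroup M] [Module R M]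

lemma eigenspace_inf_eigenspace_le_eigenspace_mul (f g : End R M) (a b : R) :
    eigenspace f a ⊓ eigenspace g b ≤ eigenspace (f * g) (a * b) := by
  rintro v ⟨hf, hg⟩
  rw [SetLike.mem_coe, mem_eigenspace_iff] at hf hg
  rw [mem_eigenspace_iff, mul_apply, hg, map_smul, hf, smul_smul, mul_comm]

lemma sub_apply_mem_eigenspace_neg_one {f : End R M} (hf : f * f = 1) (v : M) :
    v - f v ∈ eigenspace f (-1) := by
  rw [mem_eigenspace_iff, map_sub, ← mul_apply, hf, one_apply, neg_one_smul, neg_sub]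

end CommRing

variable {K V : Type*} [Field K] [AddCommGroup V] [Module K V]

lemma mul_self_eq_one_of_apply_eq_smul {g : End K V} (hg : g * g = 1) {v : V} (hv : v ≠ 0)
    {c : K} (hgv : g v = c • v) : c * c = 1 :=
  smul_left_injective K hv <| by
    simp only
    rw [mul_smul, ← hgv, ← map_smul, ← hgv, ← mul_apply, hg, one_apply, one_smul]

lemma eigenspace_neg_one_le_eigenspace_one_of_commute (hK : ringChar K ≠ 2) {f g : End K V}
    (hfg : Commute f g) (hf : f * f = 1) (h : eigenspace f (-1) ≤ eigenspace g 1) :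
    eigenspace g (-1) ≤ eigenspace f 1 := by
  intro v hv
  have hg_neg : v - f v ∈ eigenspace g (-1) :=
    sub_mem hv (mapsTo_genEigenspace_of_comm hfg.symm (-1) 1 hv)
  have hg_one : v - f v ∈ eigenspace g 1 := h (sub_apply_mem_eigenspace_neg_one hf v)
  have hzero : v - f v = 0 :=
    Submodule.disjoint_def.mp
      (disjoint_genEigenspace g (Ring.neg_one_ne_one_of_char_ne_two hK).symm 1 1) _ hg_one hg_neg
  rw [mem_eigenspace_iff, one_smul, (sub_eq_zero.mp hzero).symm]

end Module.End

open Module.End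

lemma CoxeterSystem.apply_basis_eq_self_of_commute_of_length_lt {B W : Type*} [Group W]
    {M : CoxeterMatrix B} (cs : CoxeterSystem M W) {R : Type*} [AddCommGroup R] [Module ℚ R]
    (ρ : Representation ℚ W R) (bα : Basis B ℚ R) {i : B} {w : W}
    (hrefl : eigenspace (ρ (cs.simple i)) (-1) = ℚ ∙ bα i)
    (hpos : cs.length w < cs.length (w * cs.simple i) →
      ∀ j : B, 0 ≤ bα.repr (ρ w (bα i)) j)
    (hw : w * w = 1) (hc : cs.simple i * w = w * cs.simple i)
    (hl : cs.length w < cs.length (cs.simple i * w)) :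
    ρ w (bα i) = bα i := by
  have hα : bα i ∈ eigenspace (ρ (cs.simple i)) (-1) :=
    hrefl ▸ Submodule.mem_span_singleton_self _
  obtain ⟨c, hwα⟩ : ∃ c : ℚ, c • bα i = ρ w (bα i) :=
    Submodule.mem_span_singleton.mp <|
      hrefl ▸ mapsTo_genEigenspace_of_comm (Commute.map hc ρ) (-1) 1 hα
  have hc_nonneg : 0 ≤ c := by
    have := hpos (hc ▸ hl) i
    rwa [← hwα, map_smul, Finsupp.smul_apply, bα.repr_self, Finsupp.single_eq_same,
      smul_eq_mul, mul_one] at this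
  have hc_sq : c * c = 1 :=
    mul_self_eq_one_of_apply_eq_smul (by rw [← map_mul, hw, map_one]) (bα.ne_zero i) hwα.symm
  have hc_one : c = 1 := (mul_self_eq_one_iff.mp hc_sq).resolve_right (by linarith)
  rw [← hwα, hc_one, one_smul]

theorem eigenspace_inclusions_for_commuting_involution_general {B W : Type*} [Group W]
    {M : CoxeterMatrix B} (cs : CoxeterSystem M W)
    (R : Type*) [AddCommGroup R] [Module ℚ R]
    (ρ : Representation ℚ W R)
    (bα : Basis B ℚ R)
    (hrefl : ∀ i : B, Module.End.eigenspace (ρ (cs.simple i)) (-1) = ℚ ∙ (bα i))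
    (hpos : ∀ (w : W) (i : B), cs.length w < cs.length (w * cs.simple i) ↔
      ∀ j : B, 0 ≤ bα.repr (ρ w (bα i)) j)
    (i : B) (w : W) (hw : w * w = 1)
    (hc : cs.simple i * w = w * cs.simple i)
    (hl : cs.length w < cs.length (cs.simple i * w)) :
    Module.End.eigenspace (ρ (cs.simple i)) (-1) ≤ Module.End.eigenspace (ρ w) 1 ∧
    Module.End.eigenspace (ρ w) (-1) ≤ Module.End.eigenspace (ρ (cs.simple i)) 1 ∧
    Disjoint (Module.End.eigenspace (ρ (cs.simple i)) (-1))
      (Module.End.eigenspace (ρ w) (-1)) ∧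
    Module.End.eigenspace (ρ (cs.simple i)) (-1) ⊔ Module.End.eigenspace (ρ w) (-1) ≤
      Module.End.eigenspace (ρ (cs.simple i * w)) (-1) := by
  have hs : ρ (cs.simple i) * ρ (cs.simple i) = 1 := by
    rw [← map_mul, cs.simple_mul_simple_self, map_one]
  have h_neg_s : eigenspace (ρ (cs.simple i)) (-1) ≤ eigenspace (ρ w) 1 := by
    rw [hrefl i, Submodule.span_singleton_le_iff_mem, mem_eigenspace_iff, one_smul]
    exact cs.apply_basis_eq_self_of_commute_of_length_lt ρ bα (hrefl i) (hpos w i).1 hw hc hl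
  have h_neg_w : eigenspace (ρ w) (-1) ≤ eigenspace (ρ (cs.simple i)) 1 :=
    eigenspace_neg_one_le_eigenspace_one_of_commute (by simp) (Commute.map hc ρ) hs h_neg_s
  refine ⟨h_neg_s, h_neg_w, ?_, sup_le ?_ ?_⟩
  · exact (disjoint_genEigenspace _ (Ring.neg_one_ne_one_of_char_ne_two (by simp)) 1 1).mono_right
      h_neg_w
  · simpa using
      (le_inf le_rfl h_neg_s).trans (eigenspace_inf_eigenspace_le_eigenspace_mul _ _ (-1) 1)
  · simpa using
      (le_inf h_neg_w le_rfl).trans (eigenspace_inf_eigenspace_le_eigenspace_mul _ _ 1 (-1))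

/-- let `W` be a Weyl group acting on its reflection representation `R` over `ℚ`
(with simple roots `bα` forming a basis, `ρ(s_i)` a reflection with `(-1)`-eigenspace the line
through `α_i`, and the standard positivity criterion for lengths). If `s` is a simple
reflection and `w` an involution with `sw = ws > w`, then the line `R^{-s}` is contained in
the fixed space `R^w`, and `R^{-w} ⊆ R^s`; consequently `R^{-s} ⊕ R^{-w} ⊆ R^{-sw}`. -/
theorem eigenspace_inclusions_for_commuting_involution {B W : Type*} [Group W] [Finite W]
    {M : CoxeterMatrix B} (cs : CoxeterSystem M W)
    (R : Type*) [AddCommGroup R] [Module ℚ R] [FiniteDimensional ℚ R]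
    (ρ : Representation ℚ W R) (hfaithful : Function.Injective ρ)
    (bα : Basis B ℚ R)
    (hrefl : ∀ i : B, Module.End.eigenspace (ρ (cs.simple i)) (-1) = ℚ ∙ (bα i))
    (hpos : ∀ (w : W) (i : B), cs.length w < cs.length (w * cs.simple i) ↔
      ∀ j : B, 0 ≤ bα.repr (ρ w (bα i)) j)
    (i : B) (w : W) (hw : w * w = 1)
    (hc : cs.simple i * w = w * cs.simple i)
    (hl : cs.length w < cs.length (cs.simple i * w)) :
    Module.End.eigenspace (ρ (cs.simple i)) (-1) ≤ Module.End.eigenspace (ρ w) 1 ∧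
    Module.End.eigenspace (ρ w) (-1) ≤ Module.End.eigenspace (ρ (cs.simple i)) 1 ∧
    Disjoint (Module.End.eigenspace (ρ (cs.simple i)) (-1))
      (Module.End.eigenspace (ρ w) (-1)) ∧
    Module.End.eigenspace (ρ (cs.simple i)) (-1) ⊔ Module.End.eigenspace (ρ w) (-1) ≤
      Module.End.eigenspace (ρ (cs.simple i * w)) (-1) :=
  eigenspace_inclusions_for_commuting_involution_general cs R ρ bα hrefl hpos i w hw hc hl
end

section
/- Let G be a connected semisimple group over an algebraically closed field of characteristic p with Frobenius φ' for a split 𝔽_q-structure, B the variety of Borel subgroups, and F : B × B → B × B given by F(B,B') = (φ'(B'), φ'(B)). Then a G-orbit O_w ⊆ B × B (corresponding to w in the Weyl group) contains an F-fixed point only if w is an involution, and conversely O_w is F-stable for every involution w; thus (B × B)^F = ⊔_{w ∈ I} O_w^F where I is the set of involutions. -/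
section OrbitInvariant

variable {W : Type*} [Group W] {Bv : Type*} {π : Bv × Bv → W} {φ : Bv → Bv}

theorem orbit_swap_frobenius_eq_inv (horbit_inv : ∀ x : Bv × Bv, π (x.2, x.1) = (π x)⁻¹)
    (hφ : ∀ x : Bv × Bv, π (φ x.1, φ x.2) = π x) (x : Bv × Bv) :
    π (φ x.2, φ x.1) = (π x)⁻¹ :=
  (hφ (x.2, x.1)).trans (horbit_inv x)

theorem orbit_mul_self_eq_one_of_swap_frobenius_fixed
    (horbit_inv : ∀ x : Bv × Bv, π (x.2, x.1) = (π x)⁻¹)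
    (hφ : ∀ x : Bv × Bv, π (φ x.1, φ x.2) = π x) {x : Bv × Bv} (hx : (φ x.2, φ x.1) = x) :
    π x * π x = 1 := by
  have hinv := orbit_swap_frobenius_eq_inv horbit_inv hφ x
  rw [hx] at hinv
  exact inv_eq_iff_mul_eq_one.mp hinv.symm

end OrbitInvariant

/-- abstract form of the orbit decomposition of `(B × B)^F`. Here `Bv` plays
the role of the flag variety of a connected semisimple group `G`, `π : Bv × Bv → W` sends a
pair of Borel subgroups to the Weyl group element `w` indexing its `G`-orbit `O_w`
(so `π x = w ↔ x ∈ O_w`, with `π (B',B) = π (B,B')⁻¹`), and `φ` is a split Frobenius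
(preserving each orbit). Let `F (B,B') = (φ B', φ B)`. Then an orbit `O_w` contains an
`F`-fixed point only if `w` is an involution; `O_w` is `F`-stable for every involution `w`;
and `(Bv × Bv)^F` is the union over involutions `w` of the fixed-point sets `O_w^F`. -/
theorem frobenius_fixed_points_decomposition {W : Type*} [Group W] {Bv : Type*}
    (π : Bv × Bv → W) (φ : Bv → Bv)
    (horbit_inv : ∀ x : Bv × Bv, π (x.2, x.1) = (π x)⁻¹)
    (hφ : ∀ x : Bv × Bv, π (φ x.1, φ x.2) = π x) :
    (∀ x : Bv × Bv, (φ x.2, φ x.1) = x → (π x) * (π x) = 1) ∧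
    (∀ w : W, w * w = 1 → ∀ x : Bv × Bv, π x = w → π (φ x.2, φ x.1) = w) ∧
    ({x : Bv × Bv | (φ x.2, φ x.1) = x} =
      ⋃ w ∈ {w : W | w * w = 1}, {x : Bv × Bv | (φ x.2, φ x.1) = x ∧ π x = w}) := by
  have hinvol := fun x ↦ orbit_mul_self_eq_one_of_swap_frobenius_fixed (x := x) horbit_inv hφ
  refine ⟨fun x ↦ hinvol x, fun w hw x hx ↦ ?_, ?_⟩
  · rw [orbit_swap_frobenius_eq_inv horbit_inv hφ x, hx, inv_eq_iff_mul_eq_one.mpr hw]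
  · ext x
    simp only [Set.mem_ofPred_eq, Set.mem_iUnion, exists_prop]
    exact ⟨fun hx ↦ ⟨π x, hinvol x hx, hx, rfl⟩, fun ⟨_, _, hx, _⟩ ↦ hx⟩
end
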